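/- arXiv:2506.23747 — 5 statements merged into one kernel-verified Lean document; each statement's English description precedes it below -/
import Mathlib

section
/- Let Λ = kQ/I be a bound quiver algebra, α an arrow of Q, and suppose the quotient algebra Γ = Λ/⟨ᾱ⟩ is a monomial arrow removal of Λ, i.e. I is generated by an α-monomial set. Then Γ ≅ kQ*/I*, where Q* is the quiver Q with the arrow α removed and I* = kQ* ∩ I. Moreover, the inclusion of Q* into Q induces an algebra monomorphism ν : Γ → Λ, the projection of Q onto Q* induces an algebra epimorphism π : Λ → Γ, and π ∘ ν = id_Γ. -/
/-! Scaffolding: path algebras of quivers, admissible ideals, monomial arrow removal,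
admissible orders and Gröbner bases, following Green. -/

open Quiver

/-- The type of all paths in a quiver `V` (with arbitrary source and target). -/
abbrev PathsIn (V : Type) [Quiver.{0} V] : Type := Σ a b : V, Quiver.Path a b

namespace PathsIn

variable {V : Type} [Quiver.{0} V]

/-- The length of a path. -/
def len (u : PathsIn V) : ℕ := u.2.2.length

/-- `u.Divides w` : the path `u` is a subpath of (divides) the path `w`,
i.e. `w = r·u·s` for (possibly trivial) paths `r`, `s`. -/
def Divides (u w : PathsIn V) : Prop :=
  ∃ (a d : V) (r : Quiver.Path a u.1) (s : Quiver.Path u.2.1 d),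
    w = ⟨a, d, (r.comp u.2.2).comp s⟩

/-- `u.ProperlyDivides w` : `u` is a proper subpath of `w`. -/
def ProperlyDivides (u w : PathsIn V) : Prop := u.Divides w ∧ u ≠ w

/-- `s.OverlapsLeftWith t` : the path `s` overlaps with the path `t` from the left,
i.e. `t = r₁·r₂` and `s = r₂·r₃` for paths `r₁, r₂, r₃` with `r₂` non-trivial.
(Equivalently, `t` overlaps with `s` from the right.) -/
def OverlapsLeftWith (s t : PathsIn V) : Prop :=
  ∃ (x : V) (r₁ : Quiver.Path t.1 x) (r₂ : Quiver.Path x t.2.1)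
    (r₃ : Quiver.Path t.2.1 s.2.1),
      0 < r₂.length ∧ t = ⟨t.1, t.2.1, r₁.comp r₂⟩ ∧ s = ⟨x, s.2.1, r₂.comp r₃⟩

end PathsIn

/-- The path of length one corresponding to an arrow. -/
def arrowPath {V : Type} [Quiver.{0} V] {a b : V} (α : a ⟶ b) : PathsIn V :=
  ⟨a, b, α.toPath⟩

/-- A path `w` avoids the arrow `α` if `α` is not a subpath of `w`. -/
def AvoidsArrow {V : Type} [Quiver.{0} V] {a b : V} (α : a ⟶ b) (w : PathsIn V) : Prop :=
  ¬ (arrowPath α).Divides w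

/-- `IsPathAlgebra k V A` : the `k`-algebra `A` is the path algebra `kQ` of the quiver `V`:
it has a `k`-basis indexed by the paths of `V`, multiplication of basis elements is given by
concatenation of composable paths (and is zero on non-composable ones), and the identity is
the sum of the trivial paths. -/
structure IsPathAlgebra (k : Type) [Field k] (V : Type) [Quiver.{0} V] [Fintype V]
    (A : Type) [Ring A] [Algebra k A] : Type where
  basis : Module.Basis (PathsIn V) k A
  mul_matched : ∀ {a b c : V} (p : Quiver.Path a b) (q : Quiver.Path b c),
    basis ⟨a, b, p⟩ * basis ⟨b, c, q⟩ = basis ⟨a, c, p.comp q⟩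
  mul_unmatched : ∀ {a b b' c : V} (p : Quiver.Path a b) (q : Quiver.Path b' c),
    b ≠ b' → basis ⟨a, b, p⟩ * basis ⟨b', c, q⟩ = 0
  one_def : (1 : A) = ∑ a : V, basis ⟨a, a, Quiver.Path.nil⟩

namespace IsPathAlgebra

variable {k : Type} [Field k] {V : Type} [Quiver.{0} V] [Fintype V]
  {A : Type} [Ring A] [Algebra k A]

/-- The path `u` occurs in the element `z` of the path algebra (i.e. `u` has a non-zero
coefficient in `z`). -/
def OccursIn (PA : IsPathAlgebra k V A) (u : PathsIn V) (z : A) : Prop :=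
  PA.basis.repr z u ≠ 0

/-- The path `u` occurs in the subset `T` of the path algebra. -/
def OccursInSet (PA : IsPathAlgebra k V A) (u : PathsIn V) (T : Set A) : Prop :=
  ∃ z ∈ T, PA.OccursIn u z

/-- An element of the path algebra avoids the arrow `α` if every path occurring in it does. -/
def ElemAvoids (PA : IsPathAlgebra k V A) {a b : V} (α : a ⟶ b) (z : A) : Prop :=
  ∀ u : PathsIn V, PA.OccursIn u z → AvoidsArrow α u

/-- A relation: a linear combination of paths of length at least two having a common source
and a common target. -/
def IsRelation (PA : IsPathAlgebra k V A) (z : A) : Prop :=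
  (∀ u : PathsIn V, PA.OccursIn u z → 2 ≤ u.len) ∧
  (∀ u v : PathsIn V, PA.OccursIn u z → PA.OccursIn v z → u.1 = v.1 ∧ u.2.1 = v.2.1)

end IsPathAlgebra

/-- The two-sided ideal of a ring generated by a subset, as a set: the additive closure of
the set of elements `r * t * s` with `t` in the generating set. -/
def ringIdealSpan {A : Type} [Ring A] (T : Set A) : Set A :=
  (AddSubgroup.closure {y : A | ∃ r s : A, ∃ t ∈ T, y = r * t * s} : AddSubgroup A)

/-- An admissible ideal of the path algebra: a two-sided ideal `I` with `J^n ⊆ I ⊆ J²`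
for some `n`, where `J` is the arrow ideal. -/
def IsAdmissibleIdeal {k : Type} [Field k] {V : Type} [Quiver.{0} V] [Fintype V]
    {A : Type} [Ring A] [Algebra k A] (PA : IsPathAlgebra k V A) (I : Set A) : Prop :=
  I = ringIdealSpan I ∧
  (∃ n : ℕ, ∀ u : PathsIn V, n ≤ u.len → PA.basis u ∈ I) ∧
  (∀ z ∈ I, ∀ u : PathsIn V, PA.OccursIn u z → 2 ≤ u.len)

/-- A presentation of the quotient of an algebra `A` by (the set underlying) a two-sided
ideal `I`: a surjective algebra homomorphism with kernel `I`. -/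
structure QuotPresentation (k : Type) [Field k] {A : Type} [Ring A] [Algebra k A]
    (I : Set A) (B : Type) [Ring B] [Algebra k B] : Type where
  proj : A →ₐ[k] B
  surj : Function.Surjective proj
  ker : ∀ z : A, proj z = 0 ↔ z ∈ I

section StrictMonomial

variable {k : Type} [Field k] {V : Type} [Quiver.{0} V] [Fintype V]
  {A : Type} [Ring A] [Algebra k A]

/-- The path `pαq`. -/
def pathPAQ {V : Type} [Quiver.{0} V] {va vb xp yq : V} (α : va ⟶ vb)
    (p : Quiver.Path xp va) (q : Quiver.Path vb yq) : PathsIn V :=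
  ⟨xp, yq, (p.comp α.toPath).comp q⟩

/-- Properties (P) for a subset `T` of the path algebra, relative to the arrow `α` and the
paths `p`, `q`:  (P1) every element of `T` other than `pαq` avoids `α`;
(P2) `p` does not overlap from the left with any path occurring in `T`;
(P2ᵒᵖ) `q` does not overlap from the right with any path occurring in `T`;
(P3) no path occurring in `T` divides `p` or `q`. -/
structure SatisfiesP (PA : IsPathAlgebra k V A) {va vb xp yq : V} (α : va ⟶ vb)
    (T : Set A) (p : Quiver.Path xp va) (q : Quiver.Path vb yq) : Prop where
  p1 : ∀ z ∈ T, z ≠ PA.basis (pathPAQ α p q) → PA.ElemAvoids α z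
  p2 : ∀ u : PathsIn V, PA.OccursInSet u T →
    ¬ PathsIn.OverlapsLeftWith ⟨xp, va, p⟩ u
  p2op : ∀ u : PathsIn V, PA.OccursInSet u T →
    ¬ PathsIn.OverlapsLeftWith u ⟨vb, yq, q⟩
  p3 : ∀ u : PathsIn V, PA.OccursInSet u T →
    ¬ u.Divides ⟨xp, va, p⟩ ∧ ¬ u.Divides ⟨vb, yq, q⟩

/-- The common context for (strict) `α`-monomial generating sets: `p`, `q` avoid `α`,
at most one of them is trivial, and `T` is a finite generating set of relations for `I`. -/
structure IsMonGenData (PA : IsPathAlgebra k V A) {va vb xp yq : V} (α : va ⟶ vb)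
    (I : Set A) (T : Set A) (p : Quiver.Path xp va) (q : Quiver.Path vb yq) : Prop where
  finite : T.Finite
  rels : ∀ t ∈ T, PA.IsRelation t
  gen : I = ringIdealSpan T
  p_avoids : AvoidsArrow α (⟨xp, va, p⟩ : PathsIn V)
  q_avoids : AvoidsArrow α (⟨vb, yq, q⟩ : PathsIn V)
  not_both_trivial : 0 < p.length ∨ 0 < q.length

/-- `T` is a strict `α`-monomial generating set for the ideal `I`, relative to the paths
`p` and `q`. -/
structure IsStrictMonomialGenSet (PA : IsPathAlgebra k V A) {va vb xp yq : V} (α : va ⟶ vb)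
    (I : Set A) (T : Set A) (p : Quiver.Path xp va) (q : Quiver.Path vb yq) : Prop where
  data : IsMonGenData PA α I T p q
  mem : PA.basis (pathPAQ α p q) ∈ T
  others_avoid : ∀ z ∈ T, z ≠ PA.basis (pathPAQ α p q) → PA.ElemAvoids α z
  no_proper_sub : ∀ u : PathsIn V, u.ProperlyDivides (pathPAQ α p q) → PA.basis u ∉ I
  no_overlap_p : ∀ u : PathsIn V, PA.OccursInSet u T →
    ¬ PathsIn.OverlapsLeftWith ⟨xp, va, p⟩ u
  no_overlap_q : ∀ u : PathsIn V, PA.OccursInSet u T →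
    ¬ PathsIn.OverlapsLeftWith u ⟨vb, yq, q⟩
  no_divide : ∀ u : PathsIn V, PA.OccursInSet u T →
    ¬ u.Divides ⟨xp, va, p⟩ ∧ ¬ u.Divides ⟨vb, yq, q⟩

/-- `T` is an `α`-monomial generating set: every element of `T` which is not (a scalar
multiple of) a path avoids `α`. -/
structure IsMonomialGenSet (PA : IsPathAlgebra k V A) {va vb : V} (α : va ⟶ vb)
    (I : Set A) (T : Set A) : Prop where
  finite : T.Finite
  rels : ∀ t ∈ T, PA.IsRelation t
  gen : I = ringIdealSpan T
  mono : ∀ t ∈ T, (∃ (u : PathsIn V) (c : k), c ≠ 0 ∧ t = c • PA.basis u) ∨ PA.ElemAvoids α t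

end StrictMonomial

section Groebner

variable {k : Type} [Field k] {V : Type} [Quiver.{0} V] [Fintype V]
  {A : Type} [Ring A] [Algebra k A]

/-- An admissible order on the set of paths of a quiver: a well-order compatible with left
and right multiplication, for which every subpath of a path precedes it. -/
structure AdmissibleOrder (V : Type) [Quiver.{0} V] : Type 1 where
  le : PathsIn V → PathsIn V → Prop
  refl : ∀ u, le u u
  trans : ∀ u v w, le u v → le v w → le u w
  antisymm : ∀ u v, le u v → le v u → u = v
  total : ∀ u v, le u v ∨ le v u
  wf : WellFounded (fun u w => le u w ∧ u ≠ w)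
  right_compat : ∀ (u w : PathsIn V), le u w → ∀ (hc : u.2.1 = w.2.1) (z : V)
    (r : Quiver.Path w.2.1 z),
      le ⟨u.1, z, u.2.2.comp (r.cast hc.symm rfl)⟩ ⟨w.1, z, w.2.2.comp r⟩
  left_compat : ∀ (u w : PathsIn V), le u w → ∀ (hc : u.1 = w.1) (z : V)
    (r : Quiver.Path z w.1),
      le ⟨z, u.2.1, (r.cast rfl hc.symm).comp u.2.2⟩ ⟨z, w.2.1, r.comp w.2.2⟩
  subpath_le : ∀ u w, PathsIn.Divides u w → le u w

/-- `IsTip PA O z u` : the path `u` is the `O`-largest path occurring in `z`. -/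
def IsTip (PA : IsPathAlgebra k V A) (O : AdmissibleOrder V) (z : A) (u : PathsIn V) : Prop :=
  PA.OccursIn u z ∧ ∀ w : PathsIn V, PA.OccursIn w z → O.le w u

/-- `G` is a Gröbner basis for the ideal `I` with respect to the admissible order `O`:
`G ⊆ I` and the tip of every non-zero element of `I` is divisible by the tip of some
element of `G`. -/
def IsGroebnerBasis (PA : IsPathAlgebra k V A) (O : AdmissibleOrder V)
    (I : Set A) (G : Set A) : Prop :=
  G ⊆ I ∧ ∀ z ∈ I, z ≠ 0 → ∃ g ∈ G, ∃ tg tz : PathsIn V,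
    IsTip PA O g tg ∧ IsTip PA O z tz ∧ tg.Divides tz

/-- A strict `α`-monomial Gröbner basis for `I`, relative to the paths `p`, `q` (which
avoid `α`, have the appropriate endpoints, and at most one of which is trivial):
`pαq ∈ 𝒢`, every other element of `𝒢` avoids `α`, and no tip of an element of `𝒢`
overlaps with `p` from the right, overlaps with `q` from the left, or divides `p` or `q`. -/
structure IsStrictMonomialGB (PA : IsPathAlgebra k V A) (O : AdmissibleOrder V)
    {va vb xp yq : V} (α : va ⟶ vb) (I : Set A) (G : Set A)
    (p : Quiver.Path xp va) (q : Quiver.Path vb yq) : Prop where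
  gb : IsGroebnerBasis PA O I G
  p_avoids : AvoidsArrow α (⟨xp, va, p⟩ : PathsIn V)
  q_avoids : AvoidsArrow α (⟨vb, yq, q⟩ : PathsIn V)
  not_both_trivial : 0 < p.length ∨ 0 < q.length
  mem : PA.basis (pathPAQ α p q) ∈ G
  others_avoid : ∀ z ∈ G, z ≠ PA.basis (pathPAQ α p q) → PA.ElemAvoids α z
  tips_no_overlap_p : ∀ g ∈ G, ∀ u : PathsIn V, IsTip PA O g u →
    ¬ PathsIn.OverlapsLeftWith ⟨xp, va, p⟩ u
  tips_no_overlap_q : ∀ g ∈ G, ∀ u : PathsIn V, IsTip PA O g u →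
    ¬ PathsIn.OverlapsLeftWith u ⟨vb, yq, q⟩
  tips_no_divide : ∀ g ∈ G, ∀ u : PathsIn V, IsTip PA O g u →
    ¬ u.Divides ⟨xp, va, p⟩ ∧ ¬ u.Divides ⟨vb, yq, q⟩

end Groebner

section ArrowRemoval

/-- The vertex set of the quiver `Q*` obtained from `Q` by removing the arrow `α`
(a type synonym for the vertex set of `Q`). -/
def RemoveArrow (V : Type) [Quiver.{0} V] {va vb : V} (_α : va ⟶ vb) : Type := V

variable {V : Type} [Quiver.{0} V] {va vb : V} (α : va ⟶ vb)

/-- The quiver `Q*`: the arrows of `Q` other than `α`. -/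
instance : Quiver.{0} (RemoveArrow V α) :=
  ⟨fun a b => {f : (show V from a) ⟶ (show V from b) //
    (⟨a, b, f⟩ : Σ x y : V, x ⟶ y) ≠ ⟨va, vb, α⟩}⟩

instance [Fintype V] : Fintype (RemoveArrow V α) := inferInstanceAs (Fintype V)

/-- The inclusion of the quiver `Q*` into `Q`. -/
def inclRemove : Prefunctor (RemoveArrow V α) V where
  obj := fun a => (show V from a)
  map := fun f => f.val

/-- The induced inclusion on paths. -/
def mapPathsIn (u : PathsIn (RemoveArrow V α)) : PathsIn V :=
  ⟨(inclRemove α).obj u.1, (inclRemove α).obj u.2.1, (inclRemove α).mapPath u.2.2⟩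

end ArrowRemoval


/-! The paths avoiding `α` span a copy of `kQ*` inside `kQ`, on which `ι ∘ πQ` is the identity,
while `ι ∘ πQ` kills every path through `α`; hence `z - ι (πQ z) ∈ ⟨ᾱ⟩` for all `z`. Every
generator of `I` is either a scalar multiple of a path, fixed or killed by `ι ∘ πQ`, or avoids `α`
and is fixed, so `ι ∘ πQ` maps `I` into itself. Therefore `πQ` descends to a surjection
`Λ → kQ*/I*` with kernel `⟨ᾱ⟩`, split by the map `kQ*/I* → Λ` induced by `ι`. -/

open scoped Pointwise in
theorem ringIdealSpan_eq_span {A : Type} [Ring A] (T : Set A) :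
    ringIdealSpan T = TwoSidedIdeal.span T := by
  ext z
  rw [SetLike.mem_coe, TwoSidedIdeal.mem_span_iff_mem_addSubgroup_closure]
  suffices h : {y : A | ∃ r s : A, ∃ t ∈ T, y = r * t * s} = Set.univ * T * Set.univ by
    rw [← h]; rfl
  ext y
  simp only [Set.mem_ofPred_eq, Set.mem_mul, Set.mem_univ, true_and]
  constructor
  · rintro ⟨r, s, t, ht, rfl⟩
    exact ⟨_, ⟨r, t, ht, rfl⟩, s, rfl⟩
  · rintro ⟨_, ⟨r, t, ht, rfl⟩, s, rfl⟩
    exact ⟨r, s, t, ht, rfl⟩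

namespace QuotPresentation

variable {k : Type} [Field k] {A B C A' : Type} [Ring A] [Algebra k A] [Ring B] [Algebra k B]
  [Ring C] [Algebra k C] [Ring A'] [Algebra k A'] {I : Set A}

noncomputable def lift (P : QuotPresentation k I B) (g : A →ₐ[k] C) (hg : ∀ z ∈ I, g z = 0) :
    B →ₐ[k] C :=
  let h : B →+* C := P.proj.toRingHom.liftOfRightInverse _
    (Function.rightInverse_surjInv P.surj) ⟨g.toRingHom, fun z hz => hg z ((P.ker z).mp hz)⟩
  have h_proj : ∀ z, h (P.proj z) = g z := RingHom.liftOfRightInverse_comp_apply _ _ _ _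
  { h with
    commutes' := fun c =>
      (congrArg h (P.proj.commutes c).symm).trans ((h_proj _).trans (g.commutes c)) }

theorem lift_proj (P : QuotPresentation k I B) (g : A →ₐ[k] C) (hg : ∀ z ∈ I, g z = 0) (z : A) :
    P.lift g hg (P.proj z) = g z :=
  RingHom.liftOfRightInverse_comp_apply _ _ _ _ z

theorem algHom_ext (P : QuotPresentation k I B) {f g : B →ₐ[k] C}
    (h : ∀ z, f (P.proj z) = g (P.proj z)) : f = g :=
  AlgHom.ext fun b => by
    obtain ⟨z, rfl⟩ := P.surj b
    exact h z

noncomputable def algEquiv (P : QuotPresentation k I B) (P' : QuotPresentation k I C) :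
    B ≃ₐ[k] C :=
  AlgEquiv.ofAlgHom (P.lift P'.proj fun z => (P'.ker z).mpr)
    (P'.lift P.proj fun z => (P.ker z).mpr)
    (P'.algHom_ext fun z => by simp only [AlgHom.comp_apply, lift_proj, AlgHom.id_apply])
    (P.algHom_ext fun z => by simp only [AlgHom.comp_apply, lift_proj, AlgHom.id_apply])

noncomputable def map (P : QuotPresentation k I B) {J : Set A'} (P' : QuotPresentation k J C)
    (f : A →ₐ[k] A') (hf : ∀ z ∈ I, f z ∈ J) : B →ₐ[k] C :=
  P.lift (P'.proj.comp f) fun z hz => (P'.ker _).mpr (hf z hz)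

theorem map_proj (P : QuotPresentation k I B) {J : Set A'} (P' : QuotPresentation k J C)
    (f : A →ₐ[k] A') (hf : ∀ z ∈ I, f z ∈ J) (z : A) :
    P.map P' f hf (P.proj z) = P'.proj (f z) :=
  P.lift_proj _ _ z

end QuotPresentation

section Cleft

open TwoSidedIdeal

variable {k : Type} [Field k] {A Astar Λ Γstar : Type} [Ring A] [Algebra k A]
  [Ring Astar] [Algebra k Astar] [Ring Λ] [Algebra k Λ] [Ring Γstar] [Algebra k Γstar]
  {I : Set A} (P : QuotPresentation k I Λ) {ι : Astar →ₐ[k] A} {πQ : A →ₐ[k] Astar}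
  (PΓs : QuotPresentation k {z : Astar | ι z ∈ I} Γstar)

theorem QuotPresentation.map_comp_map_eq_id (hI : ∀ z ∈ I, ι (πQ z) ∈ I)
    (hfix : ∀ z, ι (πQ (ι z)) = ι z) :
    (P.map PΓs πQ hI).comp (PΓs.map P ι fun _ => id) = AlgHom.id k Γstar :=
  PΓs.algHom_ext fun z => by
    rw [AlgHom.comp_apply, QuotPresentation.map_proj, QuotPresentation.map_proj,
      AlgHom.id_apply, ← sub_eq_zero, ← map_sub, PΓs.ker, Set.mem_ofPred_eq, map_sub, hfix,
      sub_self]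
    exact (P.ker 0).mp (map_zero _)

theorem QuotPresentation.map_eq_zero_iff (hI : ∀ z ∈ I, ι (πQ z) ∈ I) {a : A} (ha : πQ a = 0)
    (hdiff : ∀ z, z - ι (πQ z) ∈ span {a}) (w : Λ) :
    P.map PΓs πQ hI w = 0 ↔ w ∈ ringIdealSpan {P.proj a} := by
  rw [ringIdealSpan_eq_span]
  constructor
  · intro hw
    obtain ⟨z, rfl⟩ := P.surj w
    rw [QuotPresentation.map_proj, PΓs.ker] at hw
    have hz : P.proj z = P.proj (z - ι (πQ z)) := by rw [map_sub, (P.ker _).mpr hw, sub_zero]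
    rw [hz, SetLike.mem_coe]
    have hle : span {a} ≤ comap P.proj (span {P.proj a}) := by
      rw [span_le, Set.singleton_subset_iff, SetLike.mem_coe, mem_comap]
      exact subset_span (Set.mem_singleton _)
    exact (mem_comap P.proj).mp (hle (hdiff z))
  · intro hw
    have hker : span {P.proj a} ≤ TwoSidedIdeal.ker (P.map PΓs πQ hI) := by
      rw [span_le, Set.singleton_subset_iff, SetLike.mem_coe, mem_ker,
        QuotPresentation.map_proj, ha, map_zero]
    exact (mem_ker _).mp (hker hw)

end Cleft

section ArrowCount

open Quiver.Path

variable {V : Type} [Quiver.{0} V] {va vb : V} (α : va ⟶ vb)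

open Classical in
noncomputable def arrowCount {x y : V} (p : Path x y) : ℕ :=
  p.addWeight fun {i j} f => if (⟨i, j, f⟩ : Σ i j : V, i ⟶ j) = ⟨va, vb, α⟩ then 1 else 0

theorem arrowCount_comp {x y z : V} (p : Path x y) (q : Path y z) :
    arrowCount α (p.comp q) = arrowCount α p + arrowCount α q :=
  addWeight_comp _ p q

theorem arrowCount_toPath_self : arrowCount α α.toPath = 1 := by
  simp [arrowCount, Hom.toPath]

theorem arrowCount_pos_of_not_avoidsArrow {u : PathsIn V} (h : ¬ AvoidsArrow α u) :
    0 < arrowCount α u.2.2 := by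
  obtain ⟨a, d, r, s, rfl⟩ := not_not.mp h
  have hcount : arrowCount α (arrowPath α).2.2 = 1 := arrowCount_toPath_self α
  rw [arrowCount_comp, arrowCount_comp, hcount]
  omega

theorem arrowCount_mapPath {x y : RemoveArrow V α} (p : Path x y) :
    arrowCount α ((inclRemove α).mapPath p) = 0 := by
  induction p with
  | nil => simp [arrowCount]
  | cons p f ih =>
    unfold arrowCount at ih ⊢
    rw [Prefunctor.mapPath_cons, addWeight_cons, ih, zero_add]
    exact if_neg f.property

theorem avoidsArrow_mapPathsIn (u : PathsIn (RemoveArrow V α)) :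
    AvoidsArrow α (mapPathsIn α u) := fun h =>
  (arrowCount_pos_of_not_avoidsArrow α (not_not.mpr h)).ne' (arrowCount_mapPath α u.2.2)

theorem not_avoidsArrow_arrowPath : ¬ AvoidsArrow α (arrowPath α) :=
  not_not.mpr ⟨va, vb, .nil, .nil, rfl⟩

end ArrowCount

namespace IsPathAlgebra

open Submodule

variable {k : Type} [Field k] {V : Type} [Quiver.{0} V] [Fintype V]
  {A : Type} [Ring A] [Algebra k A] (PA : IsPathAlgebra k V A) {va vb : V} (α : va ⟶ vb)

theorem elemAvoids_iff_mem_span {z : A} :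
    PA.ElemAvoids α z ↔ z ∈ span k (PA.basis '' {u | AvoidsArrow α u}) := by
  rw [PA.basis.mem_span_image]
  simp [ElemAvoids, OccursIn, Set.subset_def]

theorem elemAvoids_apply_of_map_basis {M : Type} [AddCommGroup M] [Module k M]
    (b : Module.Basis (PathsIn (RemoveArrow V α)) k M) (ι : M →ₗ[k] A)
    (hι : ∀ u, ι (b u) = PA.basis (mapPathsIn α u)) (z : M) : PA.ElemAvoids α (ι z) := by
  rw [elemAvoids_iff_mem_span]
  have htop : (span k (PA.basis '' {u | AvoidsArrow α u})).comap ι = ⊤ :=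
    (eq_top_iff_forall_basis_mem b).mpr fun u =>
      subset_span ⟨_, avoidsArrow_mapPathsIn α u, (hι u).symm⟩
  exact (htop ▸ mem_top : z ∈ _)

theorem apply_eq_self_of_elemAvoids (L : A →ₗ[k] A)
    (hL : ∀ u, AvoidsArrow α u → L (PA.basis u) = PA.basis u) {z : A}
    (hz : PA.ElemAvoids α z) : L z = z :=
  LinearMap.eqOn_span (g := LinearMap.id) (by rintro _ ⟨u, hu, rfl⟩; exact hL u hu)
    ((PA.elemAvoids_iff_mem_span α).mp hz)

theorem basis_mem_span_arrowPath {u : PathsIn V} (hu : ¬ AvoidsArrow α u) :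
    PA.basis u ∈ TwoSidedIdeal.span {PA.basis (arrowPath α)} := by
  obtain ⟨a, d, r, s, rfl⟩ := not_not.mp hu
  rw [← PA.mul_matched, ← PA.mul_matched]
  exact TwoSidedIdeal.mul_mem_right _ _ _
    (TwoSidedIdeal.mul_mem_left _ _ _ (TwoSidedIdeal.subset_span (Set.mem_singleton _)))

theorem sub_apply_mem_span_arrowPath (L : A →ₗ[k] A)
    (hL₀ : ∀ u, ¬ AvoidsArrow α u → L (PA.basis u) = 0)
    (hL₁ : ∀ u, AvoidsArrow α u → L (PA.basis u) = PA.basis u) (z : A) :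
    z - L z ∈ TwoSidedIdeal.span {PA.basis (arrowPath α)} := by
  let J : Submodule k A := (TwoSidedIdeal.span {PA.basis (arrowPath α)}).asIdeal.restrictScalars k
  have htop : J.comap (LinearMap.id - L) = ⊤ := by
    refine (eq_top_iff_forall_basis_mem PA.basis).mpr fun u => ?_
    by_cases hu : AvoidsArrow α u
    · simp [hL₁ u hu, J]
    · simpa [hL₀ u hu, J] using PA.basis_mem_span_arrowPath α hu
  simpa [J] using (htop ▸ mem_top : z ∈ J.comap (LinearMap.id - L))

theorem apply_mem_of_isMonomialGenSet {I T : Set A} (hT : IsMonomialGenSet PA α I T)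
    (E : A →ₐ[k] A) (hE₀ : ∀ u, ¬ AvoidsArrow α u → E (PA.basis u) = 0)
    (hE₁ : ∀ u, AvoidsArrow α u → E (PA.basis u) = PA.basis u) {z : A} (hz : z ∈ I) :
    E z ∈ I := by
  have hT_le : TwoSidedIdeal.span T ≤ TwoSidedIdeal.comap E (TwoSidedIdeal.span T) := by
    refine TwoSidedIdeal.span_le.mpr fun t ht => (TwoSidedIdeal.mem_comap E).mpr ?_
    rcases hT.mono t ht with ⟨u, c, -, rfl⟩ | havoid
    · by_cases hu : AvoidsArrow α u
      · rw [map_smul, hE₁ u hu]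
        exact TwoSidedIdeal.subset_span ht
      · rw [map_smul, hE₀ u hu, smul_zero]
        exact zero_mem _
    · have hEt : E t = t := PA.apply_eq_self_of_elemAvoids α E.toLinearMap hE₁ havoid
      rw [hEt]
      exact TwoSidedIdeal.subset_span ht
  rw [hT.gen, ringIdealSpan_eq_span] at hz ⊢
  exact (TwoSidedIdeal.mem_comap E).mp (hT_le hz)

end IsPathAlgebra

/-- let `Λ = kQ/I` be a bound quiver algebra, `α` an arrow of `Q`, and suppose
`Γ = Λ/⟨ᾱ⟩` is a monomial arrow removal of `Λ` (i.e. `I` is generated by an `α`-monomial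
set `T`).  Then `Γ ≅ kQ*/I*`, where `Q*` is `Q` with the arrow `α` removed and
`I* = kQ* ∩ I`; moreover the inclusion of `Q*` into `Q` induces an algebra monomorphism
`ν : Γ → Λ`, the projection of `Q` onto `Q*` induces an algebra epimorphism `π : Λ → Γ`,
and `π ∘ ν = id_Γ`.  (Here `ι : kQ* → kQ` is the algebra map induced by the inclusion of
quivers, `πQ : kQ → kQ*` the one induced by the projection of quivers, and `kQ*/I*` is
presented by an arbitrary quotient presentation `PΓs`.) -/
theorem monomial_arrow_removal_cleft
    {k : Type} [Field k] {V : Type} [Quiver.{0} V] [Fintype V]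
    [∀ a b : V, Fintype (a ⟶ b)]
    {A : Type} [Ring A] [Algebra k A] (PA : IsPathAlgebra k V A)
    (I : Set A) (hI : IsAdmissibleIdeal PA I)
    {Λ : Type} [Ring Λ] [Algebra k Λ] (P : QuotPresentation k I Λ)
    {va vb : V} (α : va ⟶ vb)
    (T : Set A) (hT : IsMonomialGenSet PA α I T)
    -- the path algebra `kQ*` of the quiver `Q* = Q \ {α}`
    {Astar : Type} [Ring Astar] [Algebra k Astar]
    (PAstar : IsPathAlgebra k (RemoveArrow V α) Astar)
    -- the algebra map induced by the inclusion of `Q*` into `Q`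
    (ι : Astar →ₐ[k] A)
    (hι : ∀ u : PathsIn (RemoveArrow V α), ι (PAstar.basis u) = PA.basis (mapPathsIn α u))
    -- the algebra map induced by the projection of `Q` onto `Q*`
    (πQ : A →ₐ[k] Astar)
    (hπQ₀ : ∀ u : PathsIn V, ¬ AvoidsArrow α u → πQ (PA.basis u) = 0)
    (hπQ₁ : ∀ u : PathsIn V, AvoidsArrow α u → ι (πQ (PA.basis u)) = PA.basis u)
    -- `Γ = Λ/⟨ᾱ⟩` and `Γ* = kQ*/I*` where `I* = kQ* ∩ I`
    {Γ : Type} [Ring Γ] [Algebra k Γ]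
    (PΓ : QuotPresentation k (ringIdealSpan {P.proj (PA.basis (arrowPath α))}) Γ)
    {Γstar : Type} [Ring Γstar] [Algebra k Γstar]
    (PΓs : QuotPresentation k {z : Astar | ι z ∈ I} Γstar) :
    Nonempty (Γ ≃ₐ[k] Γstar) ∧
    (∃ ν : Γstar →ₐ[k] Λ, Function.Injective ν ∧
      (∀ z : Astar, ν (PΓs.proj z) = P.proj (ι z)) ∧
      ∃ πh : Λ →ₐ[k] Γstar, Function.Surjective πh ∧
        (∀ z : A, πh (P.proj z) = PΓs.proj (πQ z)) ∧
        πh.comp ν = AlgHom.id k Γstar) := by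
  have hE₀ : ∀ u, ¬ AvoidsArrow α u → ι.comp πQ (PA.basis u) = 0 := fun u hu => by
    rw [AlgHom.comp_apply, hπQ₀ u hu, map_zero]
  have hEI : ∀ z ∈ I, ι (πQ z) ∈ I := fun _ =>
    PA.apply_mem_of_isMonomialGenSet α hT (ι.comp πQ) hE₀ hπQ₁
  have hfix : ∀ z, ι (πQ (ι z)) = ι z := fun z =>
    PA.apply_eq_self_of_elemAvoids α (ι.comp πQ).toLinearMap hπQ₁
      (PA.elemAvoids_apply_of_map_basis α PAstar.basis ι.toLinearMap hι z)
  let ν : Γstar →ₐ[k] Λ := PΓs.map P ι fun _ => id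
  let πh : Λ →ₐ[k] Γstar := P.map PΓs πQ hEI
  have hπν : πh.comp ν = AlgHom.id k Γstar := P.map_comp_map_eq_id PΓs hEI hfix
  have hretract : Function.LeftInverse πh ν := AlgHom.congr_fun hπν
  have hsurj : Function.Surjective πh := hretract.surjective
  have hker : ∀ w, πh w = 0 ↔ w ∈ ringIdealSpan {P.proj (PA.basis (arrowPath α))} :=
    P.map_eq_zero_iff PΓs hEI (hπQ₀ _ (not_avoidsArrow_arrowPath α))
      (PA.sub_apply_mem_span_arrowPath α (ι.comp πQ).toLinearMap hE₀ hπQ₁)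
  exact ⟨⟨PΓ.algEquiv ⟨πh, hsurj, hker⟩⟩, ν, hretract.injective,
    PΓs.map_proj P ι _, πh, hsurj, P.map_proj PΓs πQ hEI, hπν⟩
end

section
/- Let Λ = kQ/I be a bound quiver algebra, α an arrow of Q, and p, q paths avoiding α with t(p) = s(α), s(q) = t(α) and at most one of p, q trivial. A finite generating set T of relations for I is strict α-monomial for p, q if and only if T satisfies properties (P) non-trivially for p, q. (Equivalently: the condition 'no proper subpath of pαq lies in the ideal generated by T' in the definition of strict α-monomial is redundant, being implied by the remaining conditions.) -/
/-! Scaffolding: path algebras of quivers, admissible ideals, monomial arrow removal,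
admissible orders and Gröbner bases, following Green. -/

open Quiver

/-! If a proper subpath `u` of `pαq` lay in the ideal generated by `T`, some path `w` occurring
in some `t ∈ T` would divide `u`, hence `pαq`. This `t` cannot be `pαq` itself, which is longer
than `u`; so `t` avoids `α` by (P1), and a subpath of `pαq` avoiding `α` divides `p` or `q`,
contradicting (P3). -/

namespace Quiver.Path

variable {V : Type} [Quiver.{0} V]

theorem exists_eq_comp_of_comp_eq {a b b' c : V} {x : Path a b} {y : Path b c}
    {x' : Path a b'} {y' : Path b' c} (h : x.comp y = x'.comp y')
    (hlen : y.length ≤ y'.length) :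
    ∃ m : Path b' b, x = x'.comp m ∧ y' = m.comp y := by
  induction y generalizing b' with
  | nil => exact ⟨y', by simpa using h, by simp⟩
  | cons y e ih =>
    cases y' with
    | nil => simp at hlen
    | cons y' e' =>
      simp only [comp_cons, cons.injEq] at h
      obtain ⟨rfl, hy, he⟩ := h
      obtain ⟨m, hx, rfl⟩ := ih (eq_of_heq hy) (by simpa using hlen)
      exact ⟨m, hx, by rw [eq_of_heq he, comp_cons]⟩

end Quiver.Path

namespace PathsIn

variable {V : Type} [Quiver.{0} V]

open Quiver.Path

theorem divides_mk_iff {a b c d : V} {U : Quiver.Path c d} {P : Quiver.Path a b} :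
    Divides ⟨c, d, U⟩ ⟨a, b, P⟩ ↔ ∃ (r : Quiver.Path a c) (s : Quiver.Path d b),
      P = (r.comp U).comp s := by
  constructor
  · rintro ⟨a', b', r, s, h⟩
    simp only [Sigma.mk.injEq] at h
    obtain ⟨rfl, h⟩ := h
    obtain ⟨rfl, h⟩ := Sigma.mk.inj_iff.mp (eq_of_heq h)
    exact ⟨r, s, eq_of_heq h⟩
  · rintro ⟨r, s, rfl⟩
    exact ⟨a, b, r, s, rfl⟩

theorem divides_comp_left {a b c : V} (P : Quiver.Path a b) (Q : Quiver.Path b c) :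
    Divides ⟨a, b, P⟩ ⟨a, c, P.comp Q⟩ :=
  ⟨a, c, .nil, Q, by rw [nil_comp]⟩

theorem divides_comp_right {a b c : V} (P : Quiver.Path a b) (Q : Quiver.Path b c) :
    Divides ⟨b, c, Q⟩ ⟨a, c, P.comp Q⟩ :=
  ⟨a, c, P, .nil, by rw [comp_nil]⟩

theorem Divides.trans {u v w : PathsIn V} (huv : u.Divides v) (hvw : v.Divides w) :
    u.Divides w := by
  obtain ⟨a, d, r, s, rfl⟩ := huv
  obtain ⟨a', d', r', s', rfl⟩ := hvw
  exact ⟨a', d', r'.comp r, s.comp s', by simp only [comp_assoc]⟩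

theorem Divides.len_le {u w : PathsIn V} (h : u.Divides w) : u.len ≤ w.len := by
  obtain ⟨a, d, r, s, rfl⟩ := h
  simp only [len, length_comp]
  omega

theorem Divides.eq_of_len_le {u w : PathsIn V} (h : u.Divides w) (hlen : w.len ≤ u.len) :
    u = w := by
  obtain ⟨ua, ub, u⟩ := u
  obtain ⟨a, d, r, s, rfl⟩ := h
  simp only [len, length_comp] at hlen
  obtain rfl := eq_of_length_zero r (by omega)
  obtain rfl := eq_of_length_zero s (by omega)
  obtain rfl := Quiver.Path.eq_nil_of_length_zero r (by omega)
  obtain rfl := Quiver.Path.eq_nil_of_length_zero s (by omega)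
  simp

theorem ProperlyDivides.not_divides {u w : PathsIn V} (h : u.ProperlyDivides w) :
    ¬ w.Divides u :=
  fun hwu => h.2 (h.1.eq_of_len_le hwu.len_le)

theorem divides_comp_toPath_comp {a b c d : V} (x : Quiver.Path a b) (e : b ⟶ c)
    (y : Quiver.Path c d) {w : PathsIn V} (h : w.Divides ⟨a, d, (x.comp e.toPath).comp y⟩) :
    (arrowPath e).Divides w ∨ w.Divides ⟨a, b, x⟩ ∨ w.Divides ⟨c, d, y⟩ := by
  obtain ⟨wa, wb, w⟩ := w
  obtain ⟨r, s, h⟩ := divides_mk_iff.mp h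
  -- split on whether `w` ends inside `x` and, if not, on whether it starts after `e`
  rcases lt_or_ge y.length s.length with hys | hsy
  · obtain ⟨m, hx, rfl⟩ := exists_eq_comp_of_comp_eq h hys.le
    simp only [length_comp] at hys
    obtain ⟨m', rfl, -⟩ := exists_eq_comp_of_comp_eq hx (by simp only [length_toPath]; omega)
    exact Or.inr (Or.inl (divides_mk_iff.mpr ⟨r, m', rfl⟩))
  · obtain ⟨m, hw, rfl⟩ := exists_eq_comp_of_comp_eq h.symm hsy
    rcases le_or_gt w.length m.length with hwm | hmw
    · obtain ⟨m', -, rfl⟩ := exists_eq_comp_of_comp_eq hw hwm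
      exact Or.inr (Or.inr (divides_mk_iff.mpr ⟨m', s, rfl⟩))
    · rw [comp_assoc] at hw
      obtain ⟨m', -, hw⟩ := exists_eq_comp_of_comp_eq hw.symm
        (by simp only [length_comp, length_toPath]; omega)
      exact Or.inl (divides_mk_iff.mpr ⟨m', m, by rw [hw, comp_assoc]⟩)

end PathsIn

namespace IsPathAlgebra

variable {k : Type} [Field k] {V : Type} [Quiver.{0} V] [Fintype V]
  {A : Type} [Ring A] [Algebra k A] (PA : IsPathAlgebra k V A)

theorem occursIn_basis_iff {u v : PathsIn V} : PA.OccursIn u (PA.basis v) ↔ u = v := by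
  simp [OccursIn, Finsupp.single_apply_ne_zero]

theorem mem_span_basis_image_iff {z : A} {S : PathsIn V → Prop} :
    z ∈ Submodule.span k (PA.basis '' {u | S u}) ↔ ∀ u, PA.OccursIn u z → S u :=
  PA.basis.mem_span_image.trans ⟨fun h _ hu => h (Finsupp.mem_support_iff.mpr hu),
    fun h u hu => h u (Finsupp.mem_support_iff.mp hu)⟩

theorem OccursIn.exists_of_mul {x y : A} {u : PathsIn V} (h : PA.OccursIn u (x * y)) :
    ∃ (a b c : V) (P : Quiver.Path a b) (Q : Quiver.Path b c),
      PA.OccursIn ⟨a, b, P⟩ x ∧ PA.OccursIn ⟨b, c, Q⟩ y ∧ u = ⟨a, c, P.comp Q⟩ := by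
  apply (PA.mem_span_basis_image_iff).mp ?_ u h
  have hxy := Submodule.mul_mem_mul (PA.basis.mem_span_repr_support x)
    (PA.basis.mem_span_repr_support y)
  rw [Submodule.span_mul_span] at hxy
  refine Submodule.span_le.mpr ?_ hxy
  rintro _ ⟨_, ⟨⟨a, b, P⟩, hP, rfl⟩, _, ⟨⟨b', c, Q⟩, hQ, rfl⟩, rfl⟩
  beta_reduce
  by_cases hb : b = b'
  · subst hb
    rw [PA.mul_matched]
    exact Submodule.subset_span ⟨_, ⟨a, b, c, P, Q, Finsupp.mem_support_iff.mp hP,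
      Finsupp.mem_support_iff.mp hQ, rfl⟩, rfl⟩
  · rw [PA.mul_unmatched _ _ hb]
    exact zero_mem _

theorem exists_occursIn_divides_of_mem_ringIdealSpan {T : Set A} {z : A}
    (hz : z ∈ ringIdealSpan T) {u : PathsIn V} (hu : PA.OccursIn u z) :
    ∃ t ∈ T, ∃ w : PathsIn V, PA.OccursIn w t ∧ w.Divides u := by
  apply (PA.mem_span_basis_image_iff).mp ?_ u hu
  refine (AddSubgroup.closure_le (Submodule.span k _).toAddSubgroup).mpr ?_ hz
  rintro _ ⟨r, s, t, ht, rfl⟩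
  refine (PA.mem_span_basis_image_iff).mpr fun u hu => ?_
  obtain ⟨a, b, c, P, Q, hP, -, rfl⟩ := hu.exists_of_mul
  obtain ⟨a', b', b'', P', Q', -, hQ', hP⟩ := hP.exists_of_mul
  refine ⟨t, ht, _, hQ', (PathsIn.divides_comp_right P' Q').trans ?_⟩
  exact hP ▸ PathsIn.divides_comp_left P Q

end IsPathAlgebra

theorem SatisfiesP.basis_notMem_ringIdealSpan {k : Type} [Field k] {V : Type}
    [Quiver.{0} V] [Fintype V] {A : Type} [Ring A] [Algebra k A] {PA : IsPathAlgebra k V A}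
    {va vb xp yq : V} {α : va ⟶ vb} {T : Set A} {p : Quiver.Path xp va}
    {q : Quiver.Path vb yq} (hP : SatisfiesP PA α T p q) {u : PathsIn V}
    (hu : u.ProperlyDivides (pathPAQ α p q)) : PA.basis u ∉ ringIdealSpan T := by
  intro hmem
  obtain ⟨t, ht, w, hw, hwu⟩ :=
    PA.exists_occursIn_divides_of_mem_ringIdealSpan hmem ((PA.occursIn_basis_iff).mpr rfl)
  by_cases htα : t = PA.basis (pathPAQ α p q)
  · subst htα
    obtain rfl := (PA.occursIn_basis_iff).mp hw
    exact hu.not_divides hwu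
  · rcases PathsIn.divides_comp_toPath_comp p α q (hwu.trans hu.1) with hα | hp | hq
    · exact hP.p1 t ht htα w hw hα
    · exact (hP.p3 w ⟨t, ht, hw⟩).1 hp
    · exact (hP.p3 w ⟨t, ht, hw⟩).2 hq

/-- let `Λ = kQ/I` be a bound quiver algebra, `α` an arrow, and `p`, `q` paths
avoiding `α` with `t(p) = s(α)`, `s(q) = t(α)` and at most one of them trivial.  A finite
generating set `T` of relations for `I` is strict `α`-monomial if and only if it satisfies
properties (P) non-trivially (i.e. the condition "no proper subpath of `pαq` lies in `I`"
is redundant). -/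
theorem strictMonomialGenSet_iff_satisfiesP_nontrivially
    {k : Type} [Field k] {V : Type} [Quiver.{0} V] [Fintype V]
    [∀ a b : V, Fintype (a ⟶ b)]
    {A : Type} [Ring A] [Algebra k A] (PA : IsPathAlgebra k V A)
    (I : Set A) (hI : IsAdmissibleIdeal PA I)
    {Λ : Type} [Ring Λ] [Algebra k Λ] (P : QuotPresentation k I Λ)
    {va vb xp yq : V} (α : va ⟶ vb)
    (p : Quiver.Path xp va) (q : Quiver.Path vb yq) (T : Set A)
    (hdata : IsMonGenData PA α I T p q) :
    IsStrictMonomialGenSet PA α I T p q ↔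
      (PA.basis (pathPAQ α p q) ∈ T ∧ SatisfiesP PA α T p q) := by
  constructor
  · intro h
    exact ⟨h.mem, h.others_avoid, h.no_overlap_p, h.no_overlap_q, h.no_divide⟩
  · rintro ⟨hmem, hP⟩
    refine ⟨hdata, hmem, hP.p1, fun u hu => ?_, hP.p2, hP.p2op, hP.p3⟩
    rw [hdata.gen]
    exact hP.basis_notMem_ringIdealSpan hu
end

section
/- Let (B, A, e, l, i) be a cleft extension of abelian categories with enough projectives, and set p_A = sup{pd_B e(P) : P projective in A}, p_B = sup{pd_A i(P') : P' projective in B}, n_H = sup{pd_A H(B) : B an object of B}. Then for every object A of A and every object B of B: (i) pd_B e(A) ≤ pd_A A + p_A; (ii) pd_A i(B) ≤ pd_B B + p_B; (iii) pd_A l(B) ≤ max{n_H, pd_B B + p_B}. -/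
open CategoryTheory CategoryTheory.Limits

universe v u v' u'

/-- A cleft extension of abelian categories: `e` is faithful exact, `(l, e)` is an adjoint
pair, and `e ∘ i` is naturally isomorphic to the identity of `B`. -/
structure CleftExt (B : Type u) (A : Type u') [Category.{v} B] [Category.{v'} A]
    [Abelian B] [Abelian A] where
  i : B ⥤ A
  e : A ⥤ B
  l : B ⥤ A
  e_faithful : e.Faithful
  e_preservesFiniteLimits : PreservesFiniteLimits e
  e_preservesFiniteColimits : PreservesFiniteColimits e
  adj : l ⊣ e
  iso : i ⋙ e ≅ 𝟭 B

/-- `pdLE n M` : the object `M` admits a projective resolution of length at most `n`. -/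
def pdLE {C : Type u} [Category.{v} C] [Abelian C] : ℕ → C → Prop
  | 0, M => Projective M
  | (n+1), M => Projective M ∨ ∃ (P : C) (f : P ⟶ M), Epi f ∧ Projective P ∧ pdLE n (kernel f)

/-- The projective dimension of an object of an abelian category, valued in `ℕ∞`
(`⊤` if the object has no finite projective resolution). -/
noncomputable def pdim {C : Type u} [Category.{v} C] [Abelian C] (M : C) : ℕ∞ :=
  sInf {n : ℕ∞ | ∃ m : ℕ, n = (m : ℕ∞) ∧ pdLE m M}

/-- The finitistic dimension of an abelian category with enough projectives: the supremum of
the projective dimensions of the objects of finite projective dimension. -/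
noncomputable def findimCat (C : Type u) [Category.{v} C] [Abelian C] : ℕ∞ :=
  ⨆ (M : C) (_ : pdim M ≠ ⊤), pdim M

variable {B : Type u} {A : Type u'} [Category.{v} B] [Category.{v'} A] [Abelian B] [Abelian A]

/-- The functor `G` associated to a cleft extension, `G(X) = Ker ε_X`. -/
noncomputable def CleftExt.G (C : CleftExt B A) (X : A) : A :=
  kernel (C.adj.counit.app X)

/-- The functor `H` associated to a cleft extension, `H(Y) = G(i(Y))`. -/
noncomputable def CleftExt.H (C : CleftExt B A) (Y : B) : A :=
  C.G (C.i.obj Y)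

/-- `p_A`, the supremum of the projective dimensions of `e(P)` over projectives `P` of `A`. -/
noncomputable def CleftExt.pA (C : CleftExt B A) : ℕ∞ :=
  ⨆ (P : A) (_ : Projective P), pdim (C.e.obj P)

/-- `p_B`, the supremum of the projective dimensions of `i(P')` over projectives `P'` of `B`. -/
noncomputable def CleftExt.pB (C : CleftExt B A) : ℕ∞ :=
  ⨆ (P : B) (_ : Projective P), pdim (C.i.obj P)

/-- `n_H`, the supremum of the projective dimensions of `H(Y)` over all objects `Y` of `B`. -/
noncomputable def CleftExt.nH (C : CleftExt B A) : ℕ∞ :=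
  ⨆ (Y : B), pdim (C.H Y)

/-- `n_G`, the supremum of the projective dimensions of `G(X)` over all objects `X` of `A`. -/
noncomputable def CleftExt.nG (C : CleftExt B A) : ℕ∞ :=
  ⨆ (X : A), pdim (C.G X)

/-!
Projective dimension is compared with Mathlib's Ext-based `HasProjectiveDimensionLE`, which
supplies the estimates along short exact sequences. An exact functor `F` turns each step
`0 → K → P → X → 0` of a projective resolution into a short exact sequence, so induction on its
length gives `pd F(X) ≤ pd X + sup_P pd F(P)`; this applies to `e` and to `i`, which is exact
because `e` is faithful exact and `i ⋙ e ≅ 𝟭`. For `l`, the counit gives a short exact sequence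
`0 → H(Y) → l(e(i Y)) → i(Y) → 0` with `l(e(i Y)) ≅ l(Y)`.
-/

section ProjectiveDimension

variable {𝒞 : Type*} [Category 𝒞] [Abelian 𝒞]

lemma CategoryTheory.ShortComplex.kernelSequence_shortExact {X Y : 𝒞} (f : X ⟶ Y) [Epi f] :
    (ShortComplex.kernelSequence f).ShortExact where
  exact := ShortComplex.kernelSequence_exact f
  epi_g := ‹Epi f›

lemma pdLE.hasProjectiveDimensionLE :
    ∀ {n : ℕ} {X : 𝒞}, pdLE n X → HasProjectiveDimensionLE X n
  | 0, _, h => (projective_iff_hasProjectiveDimensionLE_zero _).mp h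
  | n + 1, X, Or.inl h => hasProjectiveDimensionLT_of_ge X 1 (n + 2) (by omega)
  | n + 1, _, Or.inr ⟨P, f, _, _, hK⟩ => by
    have := hK.hasProjectiveDimensionLE
    exact (ShortComplex.kernelSequence_shortExact f).hasProjectiveDimensionLT_X₃ (n + 1)
      this (hasProjectiveDimensionLT_of_ge P 1 (n + 2) (by omega))

variable [EnoughProjectives 𝒞]

lemma pdLE_of_hasProjectiveDimensionLE :
    ∀ {n : ℕ} {X : 𝒞}, HasProjectiveDimensionLE X n → pdLE n X
  | 0, _, h => (projective_iff_hasProjectiveDimensionLE_zero _).mpr h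
  | n + 1, X, h => Or.inr ⟨_, Projective.π X, inferInstance, inferInstance,
      pdLE_of_hasProjectiveDimensionLE <|
        (ShortComplex.kernelSequence_shortExact (Projective.π X)).hasProjectiveDimensionLT_X₁
          (n + 1)
          (hasProjectiveDimensionLT_of_ge (Projective.over X) 1 (n + 1) (by omega)) h⟩

lemma pdim_le_coe_iff {n : ℕ} {X : 𝒞} : pdim X ≤ n ↔ HasProjectiveDimensionLE X n := by
  refine ⟨fun h => ?_, fun h => sInf_le ⟨n, rfl, pdLE_of_hasProjectiveDimensionLE h⟩⟩
  set S := {k : ℕ∞ | ∃ m : ℕ, k = m ∧ pdLE m X}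
  obtain hS | hS := S.eq_empty_or_nonempty
  · simp [pdim, S, hS] at h
  obtain ⟨m, hm, hX⟩ := csInf_mem hS
  change sInf S ≤ n at h
  rw [hm, Nat.cast_le] at h
  have := hX.hasProjectiveDimensionLE
  exact hasProjectiveDimensionLT_of_ge X (m + 1) (n + 1) (by omega)

lemma pdim_le_of_forall_hasProjectiveDimensionLE {X : 𝒞} {d : ℕ∞}
    (h : ∀ n : ℕ, d ≤ n → HasProjectiveDimensionLE X n) :
    pdim X ≤ d := by
  induction d using ENat.recTopCoe with
  | top => exact le_top
  | coe k => exact pdim_le_coe_iff.mpr (h k le_rfl)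

lemma pdim_eq_of_iso {X Y : 𝒞} (e : X ≅ Y) : pdim X = pdim Y := by
  have le_of_iso {X Y : 𝒞} (e : X ≅ Y) : pdim Y ≤ pdim X :=
    pdim_le_of_forall_hasProjectiveDimensionLE fun n hn =>
      have := pdim_le_coe_iff.mp hn
      hasProjectiveDimensionLT_of_iso e (n + 1)
  exact le_antisymm (le_of_iso e.symm) (le_of_iso e)

lemma CategoryTheory.ShortComplex.ShortExact.pdim_X₂_le {S : ShortComplex 𝒞} (hS : S.ShortExact) :
    pdim S.X₂ ≤ max (pdim S.X₁) (pdim S.X₃) :=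
  pdim_le_of_forall_hasProjectiveDimensionLE fun n hn => hS.hasProjectiveDimensionLT_X₂ (n + 1)
    (pdim_le_coe_iff.mp ((le_max_left _ _).trans hn))
    (pdim_le_coe_iff.mp ((le_max_right _ _).trans hn))

lemma CategoryTheory.ShortComplex.ShortExact.pdim_X₃_le {S : ShortComplex 𝒞} (hS : S.ShortExact) :
    pdim S.X₃ ≤ max (pdim S.X₂) (pdim S.X₁ + 1) := by
  refine pdim_le_of_forall_hasProjectiveDimensionLE fun n hn => ?_
  obtain ⟨h₂, h₁⟩ := max_le_iff.mp hn
  obtain _ | m := n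
  · simp at h₁
  · push_cast at h₁
    have h₁ : pdim S.X₁ ≤ m := (ENat.add_le_add_iff_right ENat.one_ne_top).mp h₁
    exact hS.hasProjectiveDimensionLT_X₃ (m + 1) (pdim_le_coe_iff.mp h₁) (pdim_le_coe_iff.mp h₂)

end ProjectiveDimension

section ExactFunctor

variable {𝒞 𝒟 : Type*} [Category 𝒞] [Category 𝒟] [Abelian 𝒞] [Abelian 𝒟]
  [EnoughProjectives 𝒟] (F : 𝒞 ⥤ 𝒟) [PreservesFiniteLimits F] [PreservesFiniteColimits F]

lemma pdim_obj_le_add_of_pdLE {p : ℕ∞} (hp : ∀ P : 𝒞, Projective P → pdim (F.obj P) ≤ p) :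
    ∀ {n : ℕ} {X : 𝒞}, pdLE n X → pdim (F.obj X) ≤ n + p
  | 0, X, hX => by simpa using hp X hX
  | n + 1, X, Or.inl hX => (hp X hX).trans le_add_self
  | n + 1, X, Or.inr ⟨P, f, _, hP, hK⟩ =>
    calc pdim (F.obj X) ≤ max (pdim (F.obj P)) (pdim (F.obj (kernel f)) + 1) :=
          ((ShortComplex.kernelSequence_shortExact f).map_of_exact F).pdim_X₃_le
      _ ≤ max p (n + p + 1) := by
          gcongr
          exacts [hp P hP, pdim_obj_le_add_of_pdLE hp hK]
      _ ≤ ↑(n + 1) + p := by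
          push_cast
          exact max_le le_add_self (add_right_comm _ _ _).le

lemma pdim_obj_le_add [EnoughProjectives 𝒞] {p : ℕ∞}
    (hp : ∀ P : 𝒞, Projective P → pdim (F.obj P) ≤ p) (X : 𝒞) :
    pdim (F.obj X) ≤ pdim X + p := by
  induction h : pdim X using ENat.recTopCoe with
  | top => simp
  | coe n =>
    exact pdim_obj_le_add_of_pdLE F hp (pdLE_of_hasProjectiveDimensionLE (pdim_le_coe_iff.mp h.le))

end ExactFunctor

namespace CleftExt

variable (C : CleftExt B A)

instance : C.e.Faithful := C.e_faithful

instance : PreservesFiniteLimits C.e := C.e_preservesFiniteLimits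

instance : PreservesFiniteColimits C.e := C.e_preservesFiniteColimits

-- A faithful exact functor between abelian categories reflects isomorphisms, hence finite
-- (co)limits, and `i ⋙ e ≅ 𝟭 B` is exact.
instance : PreservesFiniteLimits C.i :=
  have := preservesFiniteLimits_of_natIso C.iso.symm
  preservesFiniteLimits_of_reflects_of_preserves C.i C.e

instance : PreservesFiniteColimits C.i :=
  have := preservesFiniteColimits_of_natIso C.iso.symm
  preservesFiniteColimits_of_reflects_of_preserves C.i C.e

variable [EnoughProjectives A] [EnoughProjectives B]

lemma pdim_e_obj_le (X : A) : pdim (C.e.obj X) ≤ pdim X + C.pA :=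
  pdim_obj_le_add C.e (fun P hP => le_iSup₂_of_le P hP le_rfl) X

lemma pdim_i_obj_le (Y : B) : pdim (C.i.obj Y) ≤ pdim Y + C.pB :=
  pdim_obj_le_add C.i (fun P hP => le_iSup₂_of_le P hP le_rfl) Y

lemma pdim_l_obj_le (Y : B) : pdim (C.l.obj Y) ≤ max C.nH (pdim Y + C.pB) :=
  calc pdim (C.l.obj Y) = pdim (C.l.obj (C.e.obj (C.i.obj Y))) :=
        pdim_eq_of_iso (C.l.mapIso (C.iso.app Y)).symm
    _ ≤ max (pdim (C.H Y)) (pdim (C.i.obj Y)) :=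
        (ShortComplex.kernelSequence_shortExact (C.adj.counit.app (C.i.obj Y))).pdim_X₂_le
    _ ≤ max C.nH (pdim Y + C.pB) :=
        max_le_max (le_iSup (fun Y => pdim (C.H Y)) Y) (C.pdim_i_obj_le Y)

end CleftExt

/-- for a cleft extension `(B, A, e, l, i)` of abelian categories with enough
projectives: (i) `pd_B e(X) ≤ pd_A X + p_A`; (ii) `pd_A i(Y) ≤ pd_B Y + p_B`;
(iii) `pd_A l(Y) ≤ max {n_H, pd_B Y + p_B}`. -/
theorem cleftExt_pdim_inequalities (C : CleftExt B A)
    [EnoughProjectives A] [EnoughProjectives B] :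
    (∀ X : A, pdim (C.e.obj X) ≤ pdim X + C.pA) ∧
    (∀ Y : B, pdim (C.i.obj Y) ≤ pdim Y + C.pB) ∧
    (∀ Y : B, pdim (C.l.obj Y) ≤ max C.nH (pdim Y + C.pB)) :=
  ⟨C.pdim_e_obj_le, C.pdim_i_obj_le, C.pdim_l_obj_le⟩
end

section
/- Let (B, A, e, l, i) be a cleft extension of abelian categories with enough projectives. Then for every projective object P' of B one has pd_A i(P') ≤ pd_A H(P') + 1; hence p_B ≤ n_H + 1 where p_B = sup{pd_A i(P') : P' projective in B} and n_H = sup{pd_A H(B) : B ∈ B}. -/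
/-!
The counit `ε_X : l e X ⟶ X` is always an epimorphism, and its source is projective as soon as
`e X` is (`l` is left adjoint to the exact functor `e`). As `e i P' ≅ P'`, for projective `P'`
the counit at `i P'` is an epimorphism from a projective object with kernel `H P'`, so a
projective resolution of `H P'` extends by one step to one of `i P'`.
-/


open CategoryTheory CategoryTheory.Limits

universe v u v' u'

variable {B : Type u} {A : Type u'} [Category.{v} B] [Category.{v'} A] [Abelian B] [Abelian A]

lemma pdim_le_of_pdLE {C : Type u} [Category.{v} C] [Abelian C] {M : C} {m : ℕ}
    (h : pdLE m M) : pdim M ≤ m :=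
  sInf_le ⟨m, rfl, h⟩

lemma exists_pdLE_of_pdim_ne_top {C : Type u} [Category.{v} C] [Abelian C] {M : C}
    (h : pdim M ≠ ⊤) : ∃ m : ℕ, pdim M = m ∧ pdLE m M := by
  have hne : {n : ℕ∞ | ∃ m : ℕ, n = m ∧ pdLE m M}.Nonempty :=
    Set.nonempty_iff_ne_empty.2 fun he => h (by rw [pdim, he, sInf_empty])
  exact csInf_mem hne

lemma pdim_le_pdim_kernel_add_one {C : Type u} [Category.{v} C] [Abelian C] {P M : C}
    (f : P ⟶ M) [Epi f] (hP : Projective P) : pdim M ≤ pdim (kernel f) + 1 := by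
  by_cases htop : pdim (kernel f) = ⊤
  · simp [htop]
  obtain ⟨m, hm, hpd⟩ := exists_pdLE_of_pdim_ne_top htop
  have hM : pdLE (m + 1) M := Or.inr ⟨P, f, inferInstance, hP, hpd⟩
  rw [hm]
  exact_mod_cast pdim_le_of_pdLE hM

namespace CleftExt

/-- `e(ε_X)` is split by the unit `η_{e X}` (a triangle identity) and `e` reflects epimorphisms. -/
instance epi_counit_app (C : CleftExt B A) (X : A) : Epi (C.adj.counit.app X) := by
  have := C.e_faithful
  have : IsSplitEpi (C.e.map (C.adj.counit.app X)) :=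
    ⟨⟨⟨C.adj.unit.app _, C.adj.right_triangle_components X⟩⟩⟩
  exact C.e.epi_of_epi_map inferInstance

lemma pdim_le_pdim_G_add_one (C : CleftExt B A) {X : A} (hX : Projective (C.e.obj X)) :
    pdim X ≤ pdim (C.G X) + 1 := by
  have := C.e_preservesFiniteColimits
  exact pdim_le_pdim_kernel_add_one _ (C.adj.map_projective _ hX)

lemma pdim_i_obj_le_pdim_H_add_one (C : CleftExt B A) {P : B} (hP : Projective P) :
    pdim (C.i.obj P) ≤ pdim (C.H P) + 1 :=
  C.pdim_le_pdim_G_add_one (Projective.of_iso (C.iso.app P).symm hP)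

end CleftExt

theorem cleftExt_pB_le_nH_add_one_general (C : CleftExt B A) :
    (∀ P' : B, Projective P' → pdim (C.i.obj P') ≤ pdim (C.H P') + 1) ∧
    C.pB ≤ C.nH + 1 :=
  ⟨fun _ => C.pdim_i_obj_le_pdim_H_add_one,
    iSup₂_le fun P hP => (C.pdim_i_obj_le_pdim_H_add_one hP).trans
      (add_le_add_left (le_iSup (fun Y => pdim (C.H Y)) P) 1)⟩

/-- for a cleft extension `(B, A, e, l, i)` of abelian categories with enough
projectives, `pd_A i(P') ≤ pd_A H(P') + 1` for every projective object `P'` of `B`; hence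
`p_B ≤ n_H + 1`. -/
theorem cleftExt_pB_le_nH_add_one (C : CleftExt B A)
    [EnoughProjectives A] [EnoughProjectives B] :
    (∀ P' : B, Projective P' → pdim (C.i.obj P') ≤ pdim (C.H P') + 1) ∧
    C.pB ≤ C.nH + 1 :=
  cleftExt_pB_le_nH_add_one_general C
end

section
/- Let (Λ, Γ, ν, π) be a ring cleft extension, and let L be the kernel of the multiplication map Λ ⊗_Γ Λ → Λ, λ ⊗ λ' ↦ λλ' (a homomorphism of Λ-bimodules, so L is a Λ-bimodule). Then for every right Λ-module Y the sequence 0 → Y ⊗_Λ L → Y ⊗_Γ Λ → Y → 0 is exact, where Y ⊗_Γ Λ → Y is given by y ⊗ λ ↦ yλ and Y ⊗_Λ L → Y ⊗_Γ Λ is induced by the inclusion L ⊆ Λ ⊗_Γ Λ together with the canonical isomorphism Y ⊗_Λ (Λ ⊗_Γ Λ) ≅ Y ⊗_Γ Λ. In particular, the kernel of the counit ε_Y : Y ⊗_Γ Λ → Y is naturally isomorphic to Y ⊗_Λ L, i.e. the endofunctor G of Mod Λ is naturally isomorphic to − ⊗_Λ L. -/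
/-- `(T, mk)` realizes the balanced tensor product `M ⊗_S N` of a right `S`-module `M`
and a left `S`-module `N`: `mk` is biadditive and `S`-balanced, and `T` satisfies the
universal property among biadditive `S`-balanced maps out of `M × N`. -/
structure IsBalancedTensor (S : Type) [Ring S] (M N : Type)
    [AddCommGroup M] [AddCommGroup N] [Module Sᵐᵒᵖ M] [Module S N]
    (T : Type) [AddCommGroup T] (mk : M → N → T) : Prop where
  add_left : ∀ m m' n, mk (m + m') n = mk m n + mk m' n
  add_right : ∀ m n n', mk m (n + n') = mk m n + mk m n'
  balanced : ∀ (s : S) m n, mk (MulOpposite.op s • m) n = mk m (s • n)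
  universal : ∀ (Z : Type) [AddCommGroup Z] (b : M → N → Z),
      (∀ m m' n, b (m + m') n = b m n + b m' n) →
      (∀ m n n', b m (n + n') = b m n + b m n') →
      (∀ (s : S) m n, b (MulOpposite.op s • m) n = b m (s • n)) →
      ∃! f : T →+ Z, ∀ m n, f (mk m n) = b m n

namespace IsBalancedTensor

variable {S : Type} [Ring S] {M N : Type}
    [AddCommGroup M] [AddCommGroup N] [Module Sᵐᵒᵖ M] [Module S N]
    {T : Type} [AddCommGroup T] {mk : M → N → T}

theorem hom_ext (h : IsBalancedTensor S M N T mk) {Z : Type} [AddCommGroup Z]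
    {f g : T →+ Z} (hfg : ∀ m n, f (mk m n) = g (mk m n)) : f = g := by
  obtain ⟨u, -, huniq⟩ := h.universal Z (fun m n => f (mk m n))
    (fun m m' n => show f (mk (m + m') n) = f (mk m n) + f (mk m' n) by
      rw [h.add_left, map_add])
    (fun m n n' => show f (mk m (n + n')) = f (mk m n) + f (mk m n') by
      rw [h.add_right, map_add])
    (fun s m n => show f (mk (MulOpposite.op s • m) n) = f (mk m (s • n)) by
      rw [h.balanced])
  exact (huniq f fun _ _ => rfl).trans (huniq g fun m n => (hfg m n).symm).symm

theorem zero_left (h : IsBalancedTensor S M N T mk) (n : N) : mk 0 n = 0 := by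
  have h0 := h.add_left 0 0 n
  rw [add_zero] at h0
  exact (left_eq_add.mp h0)

theorem zero_right (h : IsBalancedTensor S M N T mk) (m : M) : mk m 0 = 0 := by
  have h0 := h.add_right m 0 0
  rw [add_zero] at h0
  exact (left_eq_add.mp h0)

end IsBalancedTensor

/-- let `(Λ, Γ, ν, π)` be a ring cleft extension, `Λ` carrying the
`Γ`-bimodule structure obtained by restriction of scalars along `ν`.  Let `Λ ⊗_Γ Λ` be
(a realization of) the balanced tensor product, `μ : Λ ⊗_Γ Λ → Λ` the multiplication map
and `L = Ker μ`, a left `Λ`-module via the left `Λ`-action on the first tensor factor.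
Then for every right `Λ`-module `Y`, with `Y ⊗_Γ Λ` and `Y ⊗_Λ L` realizations of the
indicated balanced tensor products, the sequence `0 → Y ⊗_Λ L → Y ⊗_Γ Λ → Y → 0` is exact,
where `Y ⊗_Γ Λ → Y` is `y ⊗ a ↦ y·a` (the counit `ε_Y`) and `Y ⊗_Λ L → Y ⊗_Γ Λ` is induced
by the inclusion `L ⊆ Λ ⊗_Γ Λ` and `y ⊗ (a ⊗ b) ↦ y·a ⊗ b`.  In particular the kernel of
the counit `ε_Y` is (naturally) isomorphic to `Y ⊗_Λ L`, i.e. `G ≅ - ⊗_Λ L`. -/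
theorem ringCleftExtension_G_iso_tensor_L
    (Λ Γ : Type) [Ring Λ] [Ring Γ] (ν : Γ →+* Λ) (π : Λ →+* Γ)
    (hπν : π.comp ν = RingHom.id Γ)
    -- the right and left `Γ`-module structures on `Λ`, restricted along `ν`
    [Module Γᵐᵒᵖ Λ] (hr : ∀ (g : Γ) (x : Λ), MulOpposite.op g • x = x * ν g)
    [Module Γ Λ] (hl : ∀ (g : Γ) (x : Λ), g • x = ν g * x)
    -- a realization `T2` of `Λ ⊗_Γ Λ`
    (T2 : Type) [AddCommGroup T2] (mk2 : Λ → Λ → T2)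
    (hT2 : IsBalancedTensor Γ Λ Λ T2 mk2)
    -- the left `Λ`-module structure on `Λ ⊗_Γ Λ` via the first factor
    [Module Λ T2] (hT2l : ∀ (a x y : Λ), a • mk2 x y = mk2 (a * x) y)
    -- the multiplication map `μ : Λ ⊗_Γ Λ → Λ` and `L = Ker μ`
    (μ : T2 →+ Λ) (hμ : ∀ x y : Λ, μ (mk2 x y) = x * y)
    -- `L` is a left `Λ`-submodule of `Λ ⊗_Γ Λ`
    [Module Λ ↥μ.ker] (hL : ∀ (a : Λ) (l : ↥μ.ker), ((a • l : ↥μ.ker) : T2) = a • (l : T2))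
    -- a right `Λ`-module `Y`, with its right `Γ`-module structure via `ν`
    (Y : Type) [AddCommGroup Y] [Module Λᵐᵒᵖ Y]
    [Module Γᵐᵒᵖ Y] (hY : ∀ (g : Γ) (y : Y),
      MulOpposite.op g • y = MulOpposite.op (ν g) • y)
    -- a realization `T1` of `Y ⊗_Γ Λ`
    (T1 : Type) [AddCommGroup T1] (mk1 : Y → Λ → T1)
    (hT1 : IsBalancedTensor Γ Y Λ T1 mk1)
    -- a realization `T3` of `Y ⊗_Λ L`
    (T3 : Type) [AddCommGroup T3] (mk3 : Y → ↥μ.ker → T3)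
    (hT3 : IsBalancedTensor Λ Y ↥μ.ker T3 mk3)
    -- the map `Y × (Λ ⊗_Γ Λ) → Y ⊗_Γ Λ`, `(y, a ⊗ b) ↦ y·a ⊗ b`
    (θ : Y → T2 →+ T1) (hθ : ∀ (y : Y) (a b : Λ),
      θ y (mk2 a b) = mk1 (MulOpposite.op a • y) b)
    -- the induced map `Y ⊗_Λ L → Y ⊗_Γ Λ`
    (m : T3 →+ T1) (hm : ∀ (y : Y) (l : ↥μ.ker), m (mk3 y l) = θ y (l : T2))
    -- the counit `ε_Y : Y ⊗_Γ Λ → Y`, `y ⊗ a ↦ y·a`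
    (εY : T1 →+ Y) (hεY : ∀ (y : Y) (a : Λ), εY (mk1 y a) = MulOpposite.op a • y) :
    Function.Injective m ∧ Function.Surjective εY ∧
      (∀ t : T1, t ∈ m.range ↔ εY t = 0) := by
  classical
  -- the element `1 ⊗ a - a ⊗ 1` of `L = ker μ`
  have hk_mem : ∀ a : Λ, mk2 1 a - mk2 a 1 ∈ μ.ker := fun a => by
    simp [AddMonoidHom.mem_ker, map_sub, hμ]
  set k : Λ → ↥μ.ker := fun a => ⟨mk2 1 a - mk2 a 1, hk_mem a⟩ with hk
  have hk_coe : ∀ a : Λ, (k a : T2) = mk2 1 a - mk2 a 1 := fun a => rfl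
  -- construct the retraction `q : T1 →+ T3`, `y ⊗ a ↦ y ⊗ (1 ⊗ a - a ⊗ 1)`
  obtain ⟨q, hq, -⟩ := hT1.universal T3 (fun y a => mk3 y (k a))
    (fun y y' a => hT3.add_left y y' (k a))
    (fun y a a' => show mk3 y (k (a + a')) = mk3 y (k a) + mk3 y (k a') by
      have hka : k (a + a') = k a + k a' := by
        apply Subtype.ext
        push_cast [hk_coe]
        rw [hT2.add_left, hT2.add_right]
        abel
      rw [hka, hT3.add_right])
    (fun g y a => show mk3 (MulOpposite.op g • y) (k a) = mk3 y (k (g • a)) by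
      have h1 : mk3 (MulOpposite.op g • y) (k a) = mk3 y (ν g • k a) := by
        rw [hY]; exact hT3.balanced (ν g) y (k a)
      have h2 : ν g • k a = k (g • a) := by
        apply Subtype.ext
        rw [hL, hk_coe, hk_coe, smul_sub, hT2l, hT2l, mul_one, hl]
        have h3 : mk2 (ν g) a = mk2 1 (ν g * a) := by
          have := hT2.balanced g 1 a
          rwa [hr, one_mul, hl] at this
        rw [h3]
      rw [h1, h2])
  -- the additive map `F : T2 → L`, `t ↦ t - μ(t) ⊗ 1`
  have hF_mem : ∀ t : T2, t - mk2 (μ t) 1 ∈ μ.ker := fun t => by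
    simp [AddMonoidHom.mem_ker, map_sub, hμ]
  set F : T2 →+ ↥μ.ker :=
    { toFun := fun t => ⟨t - mk2 (μ t) 1, hF_mem t⟩
      map_zero' := by
        apply Subtype.ext
        simp [hT2.zero_left]
      map_add' := fun t t' => by
        apply Subtype.ext
        push_cast
        rw [map_add, hT2.add_left]
        abel } with hF
  have hF_coe : ∀ t : T2, ((F t : ↥μ.ker) : T2) = t - mk2 (μ t) 1 := fun t => rfl
  -- Claim A: `q (θ y t) = mk3 y (F t)` for all `t`
  have hGy : ∀ y : Y, ∃ G : T2 →+ T3, ∀ t, G t = mk3 y (F t) := fun y =>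
    ⟨{ toFun := fun t => mk3 y (F t)
       map_zero' := show mk3 y (F 0) = 0 by rw [map_zero]; exact hT3.zero_right y
       map_add' := fun t t' => show mk3 y (F (t + t')) = mk3 y (F t) + mk3 y (F t') by
         rw [map_add, hT3.add_right] }, fun t => rfl⟩
  have hA : ∀ (y : Y) (t : T2), q (θ y t) = mk3 y (F t) := by
    intro y t
    obtain ⟨G, hG⟩ := hGy y
    have heq : q.comp (θ y) = G := by
      apply hT2.hom_ext
      intro a b
      rw [AddMonoidHom.comp_apply, hθ, hq, hG]
      have h1 : mk3 (MulOpposite.op a • y) (k b) = mk3 y (a • k b) :=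
        hT3.balanced a y (k b)
      have h2 : a • k b = F (mk2 a b) := by
        apply Subtype.ext
        rw [hL, hk_coe, hF_coe, smul_sub, hT2l, hT2l, mul_one, hμ]
      rw [h1, h2]
    calc q (θ y t) = (q.comp (θ y)) t := rfl
      _ = G t := by rw [heq]
      _ = mk3 y (F t) := hG t
  -- `q ∘ m = id`
  have hqm : ∀ s : T3, q (m s) = s := by
    intro s
    have heq : q.comp m = AddMonoidHom.id T3 := by
      apply hT3.hom_ext
      intro y l
      rw [AddMonoidHom.comp_apply, hm, hA, AddMonoidHom.id_apply]
      congr 1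
      apply Subtype.ext
      rw [hF_coe]
      have hl0 : μ (l : T2) = 0 := l.2
      rw [hl0, hT2.zero_left, sub_zero]
    calc q (m s) = (q.comp m) s := rfl
      _ = s := by rw [heq]; rfl
  have hm_inj : Function.Injective m := Function.LeftInverse.injective hqm
  -- Claim C: `εY (θ y t) = op (μ t) • y`
  have hC : ∀ (y : Y) (t : T2), εY (θ y t) = MulOpposite.op (μ t) • y := by
    intro y t
    have heq : εY.comp (θ y) =
        { toFun := fun t => MulOpposite.op (μ t) • y
          map_zero' := show MulOpposite.op (μ 0) • y = 0 by simp
          map_add' := fun t t' =>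
            show MulOpposite.op (μ (t + t')) • y
                = MulOpposite.op (μ t) • y + MulOpposite.op (μ t') • y by
              rw [map_add, MulOpposite.op_add, add_smul] } := by
      apply hT2.hom_ext
      intro a b
      rw [AddMonoidHom.comp_apply, hθ, hεY]
      show MulOpposite.op b • MulOpposite.op a • y = MulOpposite.op (μ (mk2 a b)) • y
      rw [hμ, MulOpposite.op_mul, mul_smul]
    calc εY (θ y t) = (εY.comp (θ y)) t := rfl
      _ = MulOpposite.op (μ t) • y := by rw [heq]; rfl
  -- `εY ∘ m = 0`
  have hεm : ∀ s : T3, εY (m s) = 0 := by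
    intro s
    have heq : εY.comp m = 0 := by
      apply hT3.hom_ext
      intro y l
      rw [AddMonoidHom.comp_apply, hm, hC]
      have hl0 : μ (l : T2) = 0 := l.2
      rw [hl0]
      simp
    calc εY (m s) = (εY.comp m) s := rfl
      _ = 0 := by rw [heq]; rfl
  -- Claim B: `m (q t) = t - mk1 (εY t) 1`
  have hB : ∀ t : T1, m (q t) = t - mk1 (εY t) 1 := by
    intro t
    set σ1 : T1 →+ T1 :=
      { toFun := fun t => mk1 (εY t) 1
        map_zero' := show mk1 (εY 0) 1 = 0 by rw [map_zero]; exact hT1.zero_left 1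
        map_add' := fun t t' => show mk1 (εY (t + t')) 1 = mk1 (εY t) 1 + mk1 (εY t') 1 by
          rw [map_add, hT1.add_left] } with hσ1
    have heq : m.comp q = AddMonoidHom.id T1 - σ1 := by
      apply hT1.hom_ext
      intro y a
      rw [AddMonoidHom.comp_apply, hq, hm, hk_coe, map_sub, hθ, hθ]
      have h1 : MulOpposite.op (1 : Λ) • y = y := by simp
      rw [h1]
      show mk1 y a - mk1 (MulOpposite.op a • y) 1 =
        mk1 y a - mk1 (εY (mk1 y a)) 1
      rw [hεY]
    calc m (q t) = (m.comp q) t := rfl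
      _ = (AddMonoidHom.id T1 - σ1) t := by rw [heq]
      _ = t - mk1 (εY t) 1 := rfl
  refine ⟨hm_inj, ?_, ?_⟩
  · intro y
    refine ⟨mk1 y 1, ?_⟩
    rw [hεY]
    simp
  · intro t
    constructor
    · rintro ⟨s, rfl⟩
      exact hεm s
    · intro ht
      refine ⟨q t, ?_⟩
      rw [hB, ht, hT1.zero_left, sub_zero]
end
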